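/- For ρ > 2, x ∈ ℝⁿ with ‖x‖_ρ = 1, and any h ∈ ℝⁿ, the second directional derivative of p(x) = ‖x‖_ρ² satisfies D²p(x)[h,h] ≤ 2(ρ−1)·‖h‖_ρ². -/

import Mathlib

/-!
On the sphere `∑ |xᵢ|^ρ = 1` we have `p = S^(2/ρ)` with `S y = ∑ |yᵢ|^ρ`, and the chain rule gives
`D²p(x)[h,h] = 2(ρ-1) ∑ |xᵢ|^(ρ-2) hᵢ² + 2(2-ρ) (∑ |xᵢ|^(ρ-2) xᵢ hᵢ)²`.
The second term is nonpositive because `ρ > 2`, and Hölder's inequality with the conjugate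
exponents `ρ/(ρ-2)` and `ρ/2` bounds the first sum by `‖x‖_ρ^(ρ-2) ‖h‖_ρ² = ‖h‖_ρ²`.
-/

open Real Filter Topology Asymptotics ContinuousLinearMap

theorem rpow_one_div_sq {s : ℝ} (hs : 0 ≤ s) (ρ : ℝ) : (s ^ (1 / ρ)) ^ 2 = s ^ (2 / ρ) := by
  rw [← rpow_natCast, ← rpow_mul hs]
  ring_nf

theorem hasDerivAt_abs_rpow_mul_self {r : ℝ} (hr : 0 < r) (t : ℝ) :
    HasDerivAt (fun s : ℝ => |s| ^ r * s) ((r + 1) * |t| ^ r) t := by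
  rcases eq_or_ne t 0 with rfl | ht
  · rw [hasDerivAt_iff_isLittleO]
    have hlim : (fun s : ℝ => |s| ^ r) =o[𝓝 0] (fun _ => (1 : ℝ)) := by
      rw [isLittleO_one_iff]
      simpa [zero_rpow hr.ne'] using
        (continuous_abs.rpow_const fun _ => Or.inr hr.le).tendsto (0 : ℝ)
    simpa [zero_rpow hr.ne'] using hlim.mul_isBigO (isBigO_refl (fun s : ℝ => s) (𝓝 0))
  · refine (((hasDerivAt_abs ht).rpow_const (p := r) (Or.inl (abs_ne_zero.2 ht))).mul
      (hasDerivAt_id t)).congr_deriv ?_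
    have hsign : (SignType.sign t : ℝ) * t = |t| := by rw [mul_comm, self_mul_sign]
    rw [id, rpow_sub_one (abs_ne_zero.2 ht)]
    field_simp
    linear_combination r * hsign

theorem fderiv_fderiv_comp_apply {E : Type*} [NormedAddCommGroup E] [NormedSpace ℝ E]
    {f : E → ℝ} {f' : E → E →L[ℝ] ℝ} {f'' : E →L[ℝ] E →L[ℝ] ℝ} {g g' : ℝ → ℝ} {g'' : ℝ}
    {x : E} (hf : ∀ᶠ y in 𝓝 x, HasFDerivAt f (f' y) y) (hf' : HasFDerivAt f' f'' x)
    (hg : ∀ᶠ s in 𝓝 (f x), HasDerivAt g (g' s) s) (hg' : HasDerivAt g' g'' (f x)) (h k : E) :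
    fderiv ℝ (fderiv ℝ fun y => g (f y)) x h k =
      g' (f x) * f'' h k + g'' * f' x h * f' x k := by
  have hfx := hf.self_of_nhds
  have hderiv : fderiv ℝ (fun y => g (f y)) =ᶠ[𝓝 x] fun y => g' (f y) • f' y := by
    filter_upwards [hf, hfx.continuousAt.tendsto.eventually hg] with y hfy hgy
    exact (hgy.comp_hasFDerivAt y hfy).fderiv
  have hsecond : HasFDerivAt (fun y => g' (f y) • f' y)
      (g' (f x) • f'' + (g'' • f' x).smulRight (f' x)) x :=
    (hg'.comp_hasFDerivAt x hfx).smul hf'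
  rw [hderiv.fderiv_eq, hsecond.fderiv]
  simp only [add_apply, smul_apply, smulRight_apply, smul_eq_mul]

section LpPower

variable {ι : Type*} [Fintype ι] {ρ : ℝ}

theorem hasFDerivAt_sum_abs_rpow (hρ : 1 < ρ) (y : ι → ℝ) :
    HasFDerivAt (fun y : ι → ℝ => ∑ i, |y i| ^ ρ)
      (∑ i, (ρ * |y i| ^ (ρ - 2) * y i) • (proj i : (ι → ℝ) →L[ℝ] ℝ)) y :=
  HasFDerivAt.fun_sum fun i _ =>
    (hasDerivAt_abs_rpow (y i) hρ).comp_hasFDerivAt (f := fun y : ι → ℝ => y i) y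
      (hasFDerivAt_apply i y)

theorem hasFDerivAt_fderiv_sum_abs_rpow (hρ : 2 < ρ) (x : ι → ℝ) :
    HasFDerivAt
      (fun y : ι → ℝ => ∑ i, (ρ * |y i| ^ (ρ - 2) * y i) • (proj i : (ι → ℝ) →L[ℝ] ℝ))
      (∑ i, ((ρ * (ρ - 1) * |x i| ^ (ρ - 2)) • (proj i : (ι → ℝ) →L[ℝ] ℝ)).smulRight
        (proj i : (ι → ℝ) →L[ℝ] ℝ)) x := by
  refine HasFDerivAt.fun_sum fun i _ => ?_
  have hi := (((hasDerivAt_abs_rpow_mul_self (sub_pos.2 hρ) (x i)).const_mul ρ).comp_hasFDerivAt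
    (f := fun y : ι → ℝ => y i) x (hasFDerivAt_apply (𝕜 := ℝ) i x)).smul_const
    (proj i : (ι → ℝ) →L[ℝ] ℝ)
  convert hi using 1
  · ext y
    simp only [Function.comp_apply]
    ring_nf
  · congr 2
    ring

theorem sum_abs_rpow_mul_sq_le (hρ : 2 < ρ) (x h : ι → ℝ) :
    ∑ i, |x i| ^ (ρ - 2) * h i ^ 2 ≤
      (∑ i, |x i| ^ ρ) ^ (1 - 2 / ρ) * (∑ i, |h i| ^ ρ) ^ (2 / ρ) := by
  have hρ0 : ρ ≠ 0 := by positivity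
  have hρ2 : ρ - 2 ≠ 0 := sub_ne_zero.2 hρ.ne'
  have hconj : HolderConjugate (ρ / (ρ - 2)) (ρ / 2) := by
    rw [holderConjugate_iff]
    refine ⟨(one_lt_div (sub_pos.2 (by linarith))).2 (by linarith), ?_⟩
    field_simp
    ring
  have hx : ∀ i, (|x i| ^ (ρ - 2)) ^ (ρ / (ρ - 2)) = |x i| ^ ρ := fun i => by
    rw [← rpow_mul (abs_nonneg _), mul_div_cancel₀ _ hρ2]
  have hh : ∀ i, (h i ^ 2) ^ (ρ / 2) = |h i| ^ ρ := fun i => by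
    rw [← sq_abs, ← rpow_natCast, ← rpow_mul (abs_nonneg _), Nat.cast_ofNat,
      mul_div_cancel₀ _ two_ne_zero]
  have holder := inner_le_Lp_mul_Lq_of_nonneg Finset.univ hconj
    (f := fun i => |x i| ^ (ρ - 2)) (g := fun i => h i ^ 2)
    (fun i _ => rpow_nonneg (abs_nonneg (x i)) _) (fun i _ => sq_nonneg (h i))
  simp only [hx, hh] at holder
  convert holder using 3 <;> field_simp

theorem fderiv_fderiv_sum_abs_rpow_rpow_apply (hρ : 2 < ρ) {x : ι → ℝ}
    (hx : ∑ i, |x i| ^ ρ = 1) (h k : ι → ℝ) :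
    fderiv ℝ (fderiv ℝ fun y : ι → ℝ => (∑ i, |y i| ^ ρ) ^ (2 / ρ)) x h k =
      2 * (ρ - 1) * ∑ i, |x i| ^ (ρ - 2) * h i * k i +
        2 * (2 - ρ) * (∑ i, |x i| ^ (ρ - 2) * x i * h i) * ∑ i, |x i| ^ (ρ - 2) * x i * k i := by
  have hρ0 : ρ ≠ 0 := by positivity
  have hg : ∀ᶠ s in 𝓝 (∑ i, |x i| ^ ρ),
      HasDerivAt (fun s => s ^ (2 / ρ)) (2 / ρ * s ^ (2 / ρ - 1)) s := by
    rw [hx]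
    filter_upwards [lt_mem_nhds one_pos] with s hs using hasDerivAt_rpow_const (Or.inl hs.ne')
  have hg' : HasDerivAt (fun s => 2 / ρ * s ^ (2 / ρ - 1)) (2 / ρ * (2 / ρ - 1))
      (∑ i, |x i| ^ ρ) := by
    rw [hx]
    simpa using (hasDerivAt_rpow_const (p := 2 / ρ - 1) (Or.inl one_ne_zero)).const_mul (2 / ρ)
  rw [fderiv_fderiv_comp_apply (.of_forall (hasFDerivAt_sum_abs_rpow (by linarith)))
    (hasFDerivAt_fderiv_sum_abs_rpow hρ x) hg hg' h k]
  simp only [hx, one_rpow, mul_one, sum_apply, smulRight_apply, smul_apply, proj_apply,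
    smul_eq_mul, Finset.mul_sum, Finset.sum_mul]
  field_simp

end LpPower

theorem lp_norm_sq_second_deriv_bound (n : ℕ) (ρ : ℝ) (hρ : 2 < ρ)
    (p : (Fin n → ℝ) → ℝ)
    (hp : p = fun x => ((∑ i, |x i| ^ ρ) ^ (1 / ρ)) ^ 2)
    (x : Fin n → ℝ) (hx : (∑ i, |x i| ^ ρ) ^ (1 / ρ) = 1)
    (h : Fin n → ℝ) :
    fderiv ℝ (fderiv ℝ p) x h h ≤ 2 * (ρ - 1) * ((∑ i, |h i| ^ ρ) ^ (1 / ρ)) ^ 2 := by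
  have hS : ∑ i, |x i| ^ ρ = 1 := by
    simpa [one_div, rpow_inv_rpow (by positivity : 0 ≤ ∑ i, |x i| ^ ρ) (by positivity : ρ ≠ 0)]
      using congrArg (· ^ ρ) hx
  have hp' : p = fun y => (∑ i, |y i| ^ ρ) ^ (2 / ρ) :=
    hp.trans (funext fun y => rpow_one_div_sq (by positivity) ρ)
  have hholder := sum_abs_rpow_mul_sq_le hρ x h
  rw [hS, one_rpow, one_mul] at hholder
  rw [hp', fderiv_fderiv_sum_abs_rpow_rpow_apply hρ hS, rpow_one_div_sq (by positivity)]
  simp only [mul_assoc _ (h _), ← sq]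
  refine add_le_of_le_of_nonpos (by gcongr; linarith) ?_
  nlinarith [mul_self_nonneg (∑ i, |x i| ^ (ρ - 2) * x i * h i)]
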